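/- Let n ≥ 1 and consider the instance with residents r_1,…,r_{⌊n/2⌋} and r'_1,…,r'_{⌈n/2⌉} and hospitals h_1,…,h_{⌊n/2⌋} with quotas [1,1] and x with quotas [⌈n/2⌉,⌈n/2⌉]; each r_i prefers x to h_i, each r'_i accepts only x, h_i accepts only r_i, and x is indifferent among all residents. Then N = {(r_i,h_i)} ∪ {(r'_i,x)} is stable with s(N) = 1 + ⌊n/2⌋, and the matching M̃ assigning ⌈n/2⌉ residents (the r_i's, plus r'_1 if n is odd) to x is stable with s(M̃) = 1. Hence, for instances with strict residents' lists drawn from a master list, the gap OPT/WST is at least 1 + ⌊n/2⌋. -/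

import Mathlib

/-- An instance of the Hospitals/Residents problem with ties, incomplete lists,
and lower/upper quotas (HRT-MSLQ).  Preferences are given by rank functions
(smaller rank = more preferred); ties are allowed (equal ranks). -/
structure HRTInstance (R H : Type) [Fintype R] [DecidableEq R] [Fintype H] [DecidableEq H] where
  acc : R → H → Prop
  rRank : R → H → ℕ
  hRank : H → R → ℕ
  lq : H → ℕ
  uq : H → ℕ

namespace HRTInstance

variable {R H : Type} [Fintype R] [DecidableEq R] [Fintype H] [DecidableEq H]

/-- The set of residents assigned to hospital `h` by assignment `M`. -/
def assignees (M : R → Option H) (h : H) : Finset R :=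
  Finset.univ.filter (fun r => M r = some h)

/-- `M` is a matching: it respects acceptability and upper quotas. -/
def IsMatching (I : HRTInstance R H) (M : R → Option H) : Prop :=
  (∀ r h, M r = some h → I.acc r h) ∧ ∀ h, (assignees M h).card ≤ I.uq h

/-- `(r, h)` is a blocking pair for `M`. -/
def Blocks (I : HRTInstance R H) (M : R → Option H) (r : R) (h : H) : Prop :=
  I.acc r h ∧
  (M r = none ∨ ∃ h', M r = some h' ∧ I.rRank r h < I.rRank r h') ∧
  ((assignees M h).card < I.uq h ∨ ∃ r' ∈ assignees M h, I.hRank h r < I.hRank h r')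

/-- `M` is a stable matching. -/
def IsStable (I : HRTInstance R H) (M : R → Option H) : Prop :=
  I.IsMatching M ∧ ∀ r h, ¬ I.Blocks M r h

/-- The total satisfaction ratio (score) of `M`:
`s(M) = Σ_h min{1, |M(h)|/ℓ(h)}`, with score `1` when `ℓ(h) = 0`. -/
def score (I : HRTInstance R H) (M : R → Option H) : ℚ :=
  ∑ h, if I.lq h = 0 then 1
       else min 1 (((assignees M h).card : ℚ) / (I.lq h : ℚ))

end HRTInstance

/-- Residents `r_i = .inl i` (`i < ⌊n/2⌋`) and `r'_i = .inr i` (`i < ⌈n/2⌉`);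
hospitals `h_i = .inl i` with quotas `[1,1]` and `x = .inr ()` with quotas
`[⌈n/2⌉,⌈n/2⌉]`.  Each `r_i` prefers `x` to `h_i`; each `r'_i` accepts only `x`;
`h_i` accepts only `r_i`; `x` is indifferent among all residents. -/
def I19 (n : ℕ) : HRTInstance (Fin (n / 2) ⊕ Fin ((n + 1) / 2)) (Fin (n / 2) ⊕ Unit) where
  acc r h := match r, h with
    | .inl i, .inl j => i = j
    | .inl _, .inr _ => True
    | .inr _, .inl _ => False
    | .inr _, .inr _ => True
  rRank _ h := match h with
    | .inl _ => 1
    | .inr _ => 0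
  hRank _ _ := 0
  lq h := match h with
    | .inl _ => 1
    | .inr _ => (n + 1) / 2
  uq h := match h with
    | .inl _ => 1
    | .inr _ => (n + 1) / 2

def N19 (n : ℕ) : (Fin (n / 2) ⊕ Fin ((n + 1) / 2)) → Option (Fin (n / 2) ⊕ Unit)
  | .inl i => some (.inl i)
  | .inr _ => some (.inr ())

/-- `M̃` assigns the `r_i`'s to `x`, plus `r'_1` if `n` is odd. -/
def M19 (n : ℕ) : (Fin (n / 2) ⊕ Fin ((n + 1) / 2)) → Option (Fin (n / 2) ⊕ Unit)
  | .inl _ => some (.inr ())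
  | .inr i => if n % 2 = 1 ∧ i.val = 0 then some (.inr ()) else none

/-!
In `N19` every hospital is filled to its upper quota, and all hospitals are indifferent among
residents, so no hospital can take part in a blocking pair. In `M19` the hospital `x` is still
full, and an empty `h_i` could only block with `r_i`, who sits at her first choice `x`.
Every hospital meets its lower quota in `N19`, whereas in `M19` only `x` does.
-/

namespace HRTInstance

variable {R H : Type} [Fintype R] [DecidableEq R] [Fintype H] [DecidableEq H]
  (I : HRTInstance R H) (M : R → Option H)

theorem not_blocks_of_uq_le_card {r : R} {h : H} (hfull : I.uq h ≤ (assignees M h).card)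
    (hind : ∀ r r', I.hRank h r = I.hRank h r') : ¬ I.Blocks M r h := by
  rintro ⟨-, -, hcap | ⟨r', -, hr'⟩⟩
  · omega
  · exact hr'.ne (hind r r')

theorem not_blocks_of_rRank_le {r : R} {h h' : H} (hr : M r = some h')
    (hle : I.rRank r h' ≤ I.rRank r h) : ¬ I.Blocks M r h := by
  rintro ⟨-, hnone | ⟨h'', hr', hlt⟩, -⟩
  · simp [hr] at hnone
  · rw [hr, Option.some_inj] at hr'
    subst hr'
    omega

def hospitalScore (h : H) : ℚ :=
  if I.lq h = 0 then 1 else min 1 (((assignees M h).card : ℚ) / (I.lq h : ℚ))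

theorem score_eq_sum_hospitalScore : I.score M = ∑ h, I.hospitalScore M h := rfl

theorem hospitalScore_eq_one_of_lq_le {h : H} (hlq : I.lq h ≤ (assignees M h).card) :
    I.hospitalScore M h = 1 := by
  unfold hospitalScore
  split_ifs with h0
  · rfl
  · refine min_eq_left ?_
    rw [one_le_div (by positivity)]
    exact_mod_cast hlq

theorem hospitalScore_eq_zero_of_assignees_eq_empty {h : H} (hlq : I.lq h ≠ 0)
    (hM : assignees M h = ∅) : I.hospitalScore M h = 0 := by
  simp [hospitalScore, hlq, hM]

end HRTInstance

open HRTInstance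

section

variable (n : ℕ)

theorem assignees_N19_inl (j : Fin (n / 2)) : assignees (N19 n) (.inl j) = {.inl j} := by
  ext (i | i) <;> simp only [assignees, Finset.mem_filter] <;> simp [N19]

theorem card_assignees_N19_inr : (assignees (N19 n) (.inr ())).card = (n + 1) / 2 := by
  rw [assignees, Finset.card_filter, Fintype.sum_sum_type]
  simp [N19]

theorem assignees_M19_inl (j : Fin (n / 2)) : assignees (M19 n) (.inl j) = ∅ := by
  ext (i | i) <;> simp only [assignees, Finset.mem_filter] <;> simp [M19]

theorem card_assignees_M19_inr : (assignees (M19 n) (.inr ())).card = (n + 1) / 2 := by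
  rw [assignees, Finset.card_filter, Fintype.sum_sum_type]
  rcases Nat.mod_two_eq_zero_or_one n with heven | hodd
  · simpa [M19, heven] using (by omega : n / 2 = (n + 1) / 2)
  · have hfirst : Finset.univ.filter (fun i : Fin ((n + 1) / 2) => i.val = 0) =
        {⟨0, by omega⟩} := by
      ext i
      simp [Fin.ext_iff]
    simpa [M19, hodd, hfirst] using (by omega : n / 2 + 1 = (n + 1) / 2)

theorem isStable_N19 : (I19 n).IsStable (N19 n) := by
  have hfull : ∀ h, (assignees (N19 n) h).card = (I19 n).uq h := by
    rintro (j | _)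
    · simp [assignees_N19_inl, I19]
    · exact card_assignees_N19_inr n
  refine ⟨⟨?_, fun h => (hfull h).le⟩, fun r h => ?_⟩
  · rintro (i | i) h hr <;> cases hr <;> simp [I19]
  · exact not_blocks_of_uq_le_card _ _ (hfull h).ge fun _ _ => rfl

theorem isStable_M19 : (I19 n).IsStable (M19 n) := by
  have hx : (assignees (M19 n) (.inr ())).card = (I19 n).uq (.inr ()) :=
    card_assignees_M19_inr n
  refine ⟨⟨?_, ?_⟩, ?_⟩
  · rintro (i | i) (j | _) hr <;> simp_all [M19, I19]
  · rintro (j | _)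
    · simp [assignees_M19_inl, I19]
    · exact hx.le
  · rintro (i | i) (j | _)
    · exact not_blocks_of_rRank_le _ _ rfl (by simp [I19])
    · exact not_blocks_of_uq_le_card _ _ hx.ge fun _ _ => rfl
    · exact fun hb => hb.1
    · exact not_blocks_of_uq_le_card _ _ hx.ge fun _ _ => rfl

theorem score_N19 : (I19 n).score (N19 n) = 1 + ((n / 2 : ℕ) : ℚ) := by
  have hi (j) : (I19 n).hospitalScore (N19 n) (.inl j) = 1 :=
    hospitalScore_eq_one_of_lq_le _ _ (by simp [assignees_N19_inl, I19])
  have hx : (I19 n).hospitalScore (N19 n) (.inr ()) = 1 :=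
    hospitalScore_eq_one_of_lq_le _ _ (card_assignees_N19_inr n).ge
  simp [score_eq_sum_hospitalScore, Fintype.sum_sum_type, hi, hx, add_comm]

theorem score_M19 : (I19 n).score (M19 n) = 1 := by
  have hi (j) : (I19 n).hospitalScore (M19 n) (.inl j) = 0 :=
    hospitalScore_eq_zero_of_assignees_eq_empty _ _ one_ne_zero (assignees_M19_inl n j)
  have hx : (I19 n).hospitalScore (M19 n) (.inr ()) = 1 :=
    hospitalScore_eq_one_of_lq_le _ _ (card_assignees_M19_inr n).ge
  simp [score_eq_sum_hospitalScore, Fintype.sum_sum_type, hi, hx]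

end

theorem stmt_19_general (n : ℕ) :
    (I19 n).IsStable (N19 n) ∧ (I19 n).IsStable (M19 n) ∧
    (I19 n).score (N19 n) = 1 + ((n / 2 : ℕ) : ℚ) ∧
    (I19 n).score (M19 n) = 1 :=
  ⟨isStable_N19 n, isStable_M19 n, score_N19 n, score_M19 n⟩

/-- `N` is stable with `s(N) = 1 + ⌊n/2⌋` and `M̃` is stable with `s(M̃) = 1`;
hence, for strict residents' lists drawn from a master list, `OPT/WST ≥ 1 + ⌊n/2⌋`. -/
theorem stmt_19 (n : ℕ) (hn : 1 ≤ n) :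
    (I19 n).IsStable (N19 n) ∧ (I19 n).IsStable (M19 n) ∧
    (I19 n).score (N19 n) = 1 + ((n / 2 : ℕ) : ℚ) ∧
    (I19 n).score (M19 n) = 1 :=
  stmt_19_general n
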